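/- The (JK)×(JK) matrix CᵀD⁻¹C is invertible, the L×L matrix Z°ᵀ(CᵀD⁻¹C)⁻¹Z° is invertible, and Z°⁻ Cᵀ P^D_ℋ D⁻¹ C Z°⁻ᵀ = (Z°ᵀ(CᵀD⁻¹C)⁻¹Z°)⁻¹; i.e. the asymptotic covariance matrix of the odds-ratio parameter estimator has the explicit representation Σ_θ̂ = (Z°ᵀ(CᵀD⁻¹C)⁻¹Z°)⁻¹. -/

import Mathlib

/-!
`Cᵀ` annihilates exactly the marginal space `𝒯` and `CᵀZ = Z°`, so `ℋ = {x | Cᵀx ∈ col Z°}`.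
Put `M = CᵀD⁻¹C` and `G = Z°ᵀM⁻¹Z°`. The map `Z°ᵀM⁻¹Cᵀ` kills the `D`-orthogonal complement
of `ℋ`, since its coordinates are `D`-inner products with the vectors `D⁻¹CM⁻¹Z°c ∈ ℋ`.
Hence if `CᵀP x = Z°c` for the projection `P` onto `ℋ`, then `Gc = Z°ᵀM⁻¹Cᵀx`, i.e.
`CᵀP = Z°G⁻¹Z°ᵀM⁻¹Cᵀ` and `CᵀPD⁻¹C = Z°G⁻¹Z°ᵀ`; the left inverse `Z°⁻` strips off `Z°`.
-/

open Matrix BigOperators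

noncomputable section

/-- Cells `(j,k)` of a `(J+1) × (K+1)` contingency table. -/
abbrev Cell (J K : ℕ) := Fin (J + 1) × Fin (K + 1)

/-- Standard unit vector `e_{jk}` in `ℝ^I`. -/
def eV {J K : ℕ} (c : Cell J K) : Cell J K → ℝ := Pi.single c 1

/-- Row-sum vector `e_{j+} = Σ_k e_{jk}`. -/
def eRow {J K : ℕ} (j : Fin (J + 1)) : Cell J K → ℝ := ∑ k : Fin (K + 1), eV (j, k)

/-- Column-sum vector `e_{+k} = Σ_j e_{jk}`. -/
def eCol {J K : ℕ} (k : Fin (K + 1)) : Cell J K → ℝ := ∑ j : Fin (J + 1), eV (j, k)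

/-- The all-ones vector `e_{++}`. -/
def eAll (J K : ℕ) : Cell J K → ℝ := ∑ j : Fin (J + 1), ∑ k : Fin (K + 1), eV (j, k)

/-- The row space `ℛ = span{e_{0+},…,e_{J+}}`. -/
def rowSpace (J K : ℕ) : Submodule ℝ (Cell J K → ℝ) :=
  Submodule.span ℝ (Set.range (eRow (J := J) (K := K)))

/-- The column space `𝒞 = span{e_{+0},…,e_{+K}}`. -/
def colSpace (J K : ℕ) : Submodule ℝ (Cell J K → ℝ) :=
  Submodule.span ℝ (Set.range (eCol (J := J) (K := K)))

/-- The diagonal space `𝒟 = span{e_{++}}`. -/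
def diagSpace (J K : ℕ) : Submodule ℝ (Cell J K → ℝ) :=
  Submodule.span ℝ {eAll J K}

/-- The marginal space `𝒯 = ℛ + 𝒞`. -/
def margSpace (J K : ℕ) : Submodule ℝ (Cell J K → ℝ) := rowSpace J K ⊔ colSpace J K

/-- `P` is the `D`-orthogonal projection matrix onto the subspace `S`:
`P x ∈ S` and `x - P x` is `D`-orthogonal to `S`, for every `x`. -/
def IsProjD {J K : ℕ} (D : Matrix (Cell J K) (Cell J K) ℝ) (S : Submodule ℝ (Cell J K → ℝ))
    (P : Matrix (Cell J K) (Cell J K) ℝ) : Prop :=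
  ∀ x, P.mulVec x ∈ S ∧ ∀ s ∈ S, (x - P.mulVec x) ⬝ᵥ D.mulVec s = 0

/-- The `D`-orthogonal complement of a subspace `S`. -/
def perpD {J K : ℕ} (D : Matrix (Cell J K) (Cell J K) ℝ) (S : Submodule ℝ (Cell J K → ℝ)) :
    Submodule ℝ (Cell J K → ℝ) where
  carrier := {x | ∀ t ∈ S, x ⬝ᵥ D.mulVec t = 0}
  add_mem' := by
    intro a b ha hb t ht
    simp only [Set.mem_setOf_eq] at *
    simp [add_dotProduct, ha t ht, hb t ht]
  zero_mem' := by
    intro t ht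
    simp
  smul_mem' := by
    intro c a ha t ht
    simp only [Set.mem_setOf_eq] at *
    simp [smul_dotProduct, ha t ht]

/-- The vector `c_{jk} = e_{jk} + e_{00} - e_{j0} - e_{0k}` (for `1 ≤ j`, `1 ≤ k`). -/
def cVec {J K : ℕ} (j : Fin J) (k : Fin K) : Cell J K → ℝ :=
  eV (j.succ, k.succ) + eV (0, 0) - eV (j.succ, 0) - eV (0, k.succ)

/-- The `I × (JK)` matrix `C` with columns `c_{jk}`. -/
def Cmat (J K : ℕ) : Matrix (Cell J K) (Fin J × Fin K) ℝ :=
  fun i jk => cVec jk.1 jk.2 i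

/-- The vector `b_k = e_{0k} - e_{00}` (for `1 ≤ k`). -/
def bVec {J K : ℕ} (k : Fin K) : Cell J K → ℝ :=
  eV ((0 : Fin (J + 1)), k.succ) - eV (0, 0)

/-- The `I × K` matrix `B` with columns `b_k`. -/
def Bmat (J K : ℕ) : Matrix (Cell J K) (Fin K) ℝ :=
  fun i k => bVec k i

/-- The `I × K` matrix `E` with columns `e_{+1},…,e_{+K}`. -/
def Emat (J K : ℕ) : Matrix (Cell J K) (Fin K) ℝ :=
  fun i k => eCol k.succ i

/-- Column space of a matrix. -/
def colSpan {m n : Type*} [Fintype n] (A : Matrix m n ℝ) : Submodule ℝ (m → ℝ) :=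
  Submodule.span ℝ (Set.range fun j => fun i => A i j)

/-- The reduced `(JK) × L` covariate matrix `Z°` with rows `z_{jk}ᵀ`, `j,k ≥ 1`. -/
def Zred {J K : ℕ} {L : Type*} (Z : Matrix (Cell J K) L ℝ) : Matrix (Fin J × Fin K) L ℝ :=
  fun jk => Z (jk.1.succ, jk.2.succ)

/-- The model space `ℋ = 𝒯 + col(Z)` of the log-linear model
`η_{jk} = α + ρ_j + γ_k + z_{jk}ᵀ θ`. -/
def modelSpace {J K : ℕ} {L : Type*} [Fintype L] (Z : Matrix (Cell J K) L ℝ) :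
    Submodule ℝ (Cell J K → ℝ) :=
  margSpace J K ⊔ colSpan Z

end

namespace Matrix

variable {R m n : Type*} [Fintype n]

theorem mulVec_injective_of_rank_eq_card [Field R] {A : Matrix m n R}
    (h : A.rank = Fintype.card n) : Function.Injective A.mulVec :=
  mulVec_injective_iff.2 <| linearIndependent_iff_card_eq_finrank_span.2 <| by
    rw [Set.finrank, ← rank_eq_finrank_span_cols, h]

theorem PosDef.transpose_mul_mul_same [CommRing R] [PartialOrder R] [StarRing R] [TrivialStar R]
    [StarOrderedRing R] [Fintype m] {A : Matrix n n R} {B : Matrix n m R} (hA : A.PosDef)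
    (hB : Function.Injective B.mulVec) : (Bᵀ * A * B).PosDef := by
  simpa using hA.conjTranspose_mul_mul_same hB

theorem mul_mul_mul_transpose_of_mul_eq_one [CommSemiring R] [Fintype m] [DecidableEq n]
    {P : Matrix n m R} {A : Matrix m n R} (hPA : P * A = 1) (B : Matrix n n R) :
    P * (A * B * Aᵀ) * Pᵀ = B := by
  calc P * (A * B * Aᵀ) * Pᵀ = P * A * B * (P * A)ᵀ := by
        simp only [transpose_mul, Matrix.mul_assoc]
    _ = B := by rw [hPA, transpose_one, Matrix.one_mul, Matrix.mul_one]

end Matrix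

section ProjD

variable {J K : ℕ} {p ι : Type*} [Fintype p] [DecidableEq p] [Fintype ι]
  {D : Matrix (Cell J K) (Cell J K) ℝ} {C : Matrix (Cell J K) p ℝ} {Z₀ : Matrix p ι ℝ}
  {S : Submodule ℝ (Cell J K → ℝ)} {P : Matrix (Cell J K) (Cell J K) ℝ}

theorem transpose_mulVec_inv_mulVec_eq_zero_of_mem_perpD (hD : D.PosDef)
    (hC : Function.Injective C.mulVec) (hS : ∀ x c, Cᵀ *ᵥ x = Z₀ *ᵥ c → x ∈ S)
    {y : Cell J K → ℝ} (hy : y ∈ perpD D S) :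
    Z₀ᵀ *ᵥ ((Cᵀ * D⁻¹ * C)⁻¹ *ᵥ (Cᵀ *ᵥ y)) = 0 := by
  set M := Cᵀ * D⁻¹ * C
  have hM : M.PosDef := hD.inv.transpose_mul_mul_same hC
  set w := Z₀ᵀ *ᵥ (M⁻¹ *ᵥ (Cᵀ *ᵥ y))
  set u := C *ᵥ (M⁻¹ *ᵥ (Z₀ *ᵥ w))
  have hu : D⁻¹ *ᵥ u ∈ S := hS _ w <| by
    rw [mulVec_mulVec, mulVec_mulVec, mulVec_mulVec,
      mul_nonsing_inv (Cᵀ * D⁻¹ * C) ((isUnit_iff_isUnit_det M).1 hM.isUnit), one_mulVec]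
  have hyu : y ⬝ᵥ u = 0 := by
    simpa [mulVec_mulVec, mul_nonsing_inv _ ((isUnit_iff_isUnit_det D).1 hD.isUnit)]
      using hy _ hu
  have hMt : (M⁻¹)ᵀ = M⁻¹ := by
    simpa only [conjTranspose_eq_transpose_of_trivial] using hM.inv.1.eq
  have : y ⬝ᵥ u = w ⬝ᵥ w := by
    simp only [u, w, dotProduct_mulVec, ← mulVec_transpose, hMt]
  rwa [this, dotProduct_self_eq_zero] at hyu

theorem IsProjD.transpose_mul_mul_inv_mul_eq [DecidableEq ι] (hP : IsProjD D S P)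
    (hD : D.PosDef) (hC : Function.Injective C.mulVec) (hZ₀ : Function.Injective Z₀.mulVec)
    (hS : ∀ x, x ∈ S ↔ ∃ c, Cᵀ *ᵥ x = Z₀ *ᵥ c) :
    Cᵀ * P * D⁻¹ * C = Z₀ * (Z₀ᵀ * (Cᵀ * D⁻¹ * C)⁻¹ * Z₀)⁻¹ * Z₀ᵀ := by
  set M := Cᵀ * D⁻¹ * C
  set G := Z₀ᵀ * M⁻¹ * Z₀
  have hM : M.PosDef := hD.inv.transpose_mul_mul_same hC
  have hG : G.PosDef := hM.inv.transpose_mul_mul_same hZ₀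
  have hCP : Cᵀ * P = Z₀ * G⁻¹ * Z₀ᵀ * M⁻¹ * Cᵀ := by
    refine mulVec_injective (funext fun x => ?_)
    obtain ⟨c, hc⟩ := (hS _).1 (hP x).1
    have hGc : G *ᵥ c = Z₀ᵀ *ᵥ (M⁻¹ *ᵥ (Cᵀ *ᵥ x)) := by
      have h := transpose_mulVec_inv_mulVec_eq_zero_of_mem_perpD hD hC
        (fun x c h => (hS x).2 ⟨c, h⟩) (hP x).2
      rw [mulVec_sub, hc, mulVec_sub, mulVec_sub, sub_eq_zero] at h
      rw [← mulVec_mulVec, ← mulVec_mulVec]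
      exact h.symm
    calc (Cᵀ * P) *ᵥ x = Z₀ *ᵥ c := by rw [← mulVec_mulVec, hc]
      _ = Z₀ *ᵥ (G⁻¹ *ᵥ (G *ᵥ c)) := by
        rw [mulVec_mulVec c G⁻¹, nonsing_inv_mul _ ((isUnit_iff_isUnit_det G).1 hG.isUnit),
          one_mulVec]
      _ = (Z₀ * G⁻¹ * Z₀ᵀ * M⁻¹ * Cᵀ) *ᵥ x := by
        simp only [hGc, mulVec_mulVec, Matrix.mul_assoc]
  calc Cᵀ * P * D⁻¹ * C = Z₀ * G⁻¹ * Z₀ᵀ * (M⁻¹ * M) := by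
        simp only [hCP, M, Matrix.mul_assoc]
    _ = Z₀ * G⁻¹ * Z₀ᵀ := by
        rw [nonsing_inv_mul _ ((isUnit_iff_isUnit_det M).1 hM.isUnit), Matrix.mul_one]

end ProjD

section Cmat

variable {J K : ℕ}

theorem eRow_apply (j : Fin (J + 1)) (i : Cell J K) :
    eRow (K := K) j i = if i.1 = j then 1 else 0 := by
  by_cases h : i.1 = j <;> simp [eRow, eV, Pi.single_apply, Prod.ext_iff, h]

theorem eCol_apply (k : Fin (K + 1)) (i : Cell J K) :
    eCol (J := J) k i = if i.2 = k then 1 else 0 := by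
  by_cases h : i.2 = k <;> simp [eCol, eV, Pi.single_apply, Prod.ext_iff, h]

theorem Cmat_transpose_mulVec_apply (x : Cell J K → ℝ) (p : Fin J × Fin K) :
    ((Cmat J K)ᵀ *ᵥ x) p =
      x (p.1.succ, p.2.succ) - x (p.1.succ, 0) - x (0, p.2.succ) + x (0, 0) := by
  change cVec p.1 p.2 ⬝ᵥ x = _
  simp only [cVec, eV, sub_dotProduct, add_dotProduct, single_dotProduct, one_mul]
  ring

theorem Cmat_mulVec_apply_succ_succ (v : Fin J × Fin K → ℝ) (j : Fin J) (k : Fin K) :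
    (Cmat J K *ᵥ v) (j.succ, k.succ) = v (j, k) := by
  have hC : ∀ q, Cmat J K (j.succ, k.succ) q = if (j, k) = q then 1 else 0 := fun q => by
    simp [Cmat, cVec, eV, Pi.single_apply, Prod.ext_iff]
  simp [mulVec, dotProduct, hC]

theorem Cmat_mulVec_injective : Function.Injective (Cmat J K).mulVec := fun v w h =>
  funext fun p => by
    simpa only [Cmat_mulVec_apply_succ_succ] using congrFun h (p.1.succ, p.2.succ)

theorem Cmat_transpose_mulVec_eq_zero_iff {x : Cell J K → ℝ} :
    (Cmat J K)ᵀ *ᵥ x = 0 ↔ x ∈ margSpace J K := by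
  constructor
  · intro hx
    have hx' : ∀ (j : Fin J) (k : Fin K),
        x (j.succ, k.succ) = x (j.succ, 0) + x (0, k.succ) - x (0, 0) := by
      intro j k
      have h := congrFun hx (j, k)
      rw [Cmat_transpose_mulVec_apply, Pi.zero_apply] at h
      linarith
    have hsum : x = ∑ j, (x (j, 0) - x (0, 0)) • eRow j + ∑ k, x (0, k) • eCol k := by
      funext ⟨j, k⟩
      simp only [Pi.add_apply, Finset.sum_apply, Pi.smul_apply, eRow_apply, eCol_apply,
        smul_eq_mul, mul_ite, mul_one, mul_zero, Finset.sum_ite_eq, Finset.mem_univ, if_true]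
      cases j using Fin.cases with
      | zero => ring
      | succ j => cases k using Fin.cases with
        | zero => ring
        | succ k => rw [hx']; ring
    rw [hsum]
    exact add_mem
      (Submodule.mem_sup_left (sum_mem fun j _ => Submodule.smul_mem _ _
        (Submodule.subset_span ⟨j, rfl⟩)))
      (Submodule.mem_sup_right (sum_mem fun k _ => Submodule.smul_mem _ _
        (Submodule.subset_span ⟨k, rfl⟩)))
  · intro hx
    suffices margSpace J K ≤ LinearMap.ker (Cmat J K)ᵀ.mulVecLin from this hx
    refine sup_le (Submodule.span_le.2 ?_) (Submodule.span_le.2 ?_) <;>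
    · rintro _ ⟨i, rfl⟩
      ext p
      simp only [mulVecLin_apply, Pi.zero_apply,
        Cmat_transpose_mulVec_apply, eRow_apply, eCol_apply]
      ring

end Cmat

section ModelSpace

variable {J K : ℕ} {ι : Type*} {Z : Matrix (Cell J K) ι ℝ}

theorem mem_colSpan_iff [Fintype ι] {m : Type*} {A : Matrix m ι ℝ} {x : m → ℝ} :
    x ∈ colSpan A ↔ ∃ c, A *ᵥ c = x := by
  rw [colSpan, show (fun j i => A i j) = A.col from rfl, ← range_mulVecLin]
  rfl

theorem Cmat_transpose_mul_eq_Zred (hZrow : ∀ j, Z (j, 0) = 0) (hZcol : ∀ k, Z (0, k) = 0) :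
    (Cmat J K)ᵀ * Z = Zred Z := by
  ext p l
  change ((Cmat J K)ᵀ *ᵥ fun i => Z i l) p = _
  simp [Cmat_transpose_mulVec_apply, hZrow, hZcol, Zred]

theorem mem_modelSpace_iff [Fintype ι] (hZrow : ∀ j, Z (j, 0) = 0) (hZcol : ∀ k, Z (0, k) = 0)
    {x : Cell J K → ℝ} : x ∈ modelSpace Z ↔ ∃ c, (Cmat J K)ᵀ *ᵥ x = Zred Z *ᵥ c := by
  have hCZ (c : ι → ℝ) : (Cmat J K)ᵀ *ᵥ (Z *ᵥ c) = Zred Z *ᵥ c := by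
    rw [mulVec_mulVec, Cmat_transpose_mul_eq_Zred hZrow hZcol]
  constructor
  · intro hx
    obtain ⟨t, ht, z, hz, rfl⟩ := Submodule.mem_sup.1 hx
    obtain ⟨c, rfl⟩ := mem_colSpan_iff.1 hz
    exact ⟨c, by rw [mulVec_add, Cmat_transpose_mulVec_eq_zero_iff.2 ht, hCZ, zero_add]⟩
  · rintro ⟨c, hc⟩
    have ht : x - Z *ᵥ c ∈ margSpace J K := by
      rw [← Cmat_transpose_mulVec_eq_zero_iff, mulVec_sub, hc, hCZ, sub_self]
    rw [modelSpace]
    simpa using Submodule.add_mem_sup ht (mem_colSpan_iff (A := Z).2 ⟨c, rfl⟩)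

end ModelSpace

theorem covariance_explicit_representation_general
    {J K L : ℕ}
    (μ : Cell J K → ℝ) (hμ : ∀ i, 0 < μ i)
    (Z : Matrix (Cell J K) (Fin L) ℝ)
    (hZrow : ∀ j, Z (j, 0) = 0) (hZcol : ∀ k, Z (0, k) = 0)
    (hZrank : (Zred Z).rank = L)
    (PH : Matrix (Cell J K) (Cell J K) ℝ)
    (hPH : IsProjD (Matrix.diagonal μ) (modelSpace Z) PH) :
    IsUnit ((Cmat J K)ᵀ * (Matrix.diagonal μ)⁻¹ * Cmat J K) ∧
    IsUnit ((Zred Z)ᵀ * ((Cmat J K)ᵀ * (Matrix.diagonal μ)⁻¹ * Cmat J K)⁻¹ * Zred Z) ∧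
    ((Zred Z)ᵀ * Zred Z)⁻¹ * (Zred Z)ᵀ * (Cmat J K)ᵀ * PH * (Matrix.diagonal μ)⁻¹ *
        Cmat J K * (((Zred Z)ᵀ * Zred Z)⁻¹ * (Zred Z)ᵀ)ᵀ =
      ((Zred Z)ᵀ * ((Cmat J K)ᵀ * (Matrix.diagonal μ)⁻¹ * Cmat J K)⁻¹ * Zred Z)⁻¹ := by
  have hD : (diagonal μ).PosDef := PosDef.diagonal hμ
  have hM := hD.inv.transpose_mul_mul_same (Cmat_mulVec_injective (J := J) (K := K))
  have hZ₀ : Function.Injective (Zred Z).mulVec :=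
    mulVec_injective_of_rank_eq_card (by rw [hZrank, Fintype.card_fin])
  refine ⟨hM.isUnit, (hM.inv.transpose_mul_mul_same hZ₀).isUnit, ?_⟩
  have hGram : ((Zred Z)ᵀ * Zred Z).PosDef := by
    simpa using PosDef.conjTranspose_mul_self _ hZ₀
  have hleft : ((Zred Z)ᵀ * Zred Z)⁻¹ * (Zred Z)ᵀ * Zred Z = 1 := by
    rw [Matrix.mul_assoc, nonsing_inv_mul _ ((isUnit_iff_isUnit_det _).1 hGram.isUnit)]
  calc _ = ((Zred Z)ᵀ * Zred Z)⁻¹ * (Zred Z)ᵀ * ((Cmat J K)ᵀ * PH * (diagonal μ)⁻¹ * Cmat J K) *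
        (((Zred Z)ᵀ * Zred Z)⁻¹ * (Zred Z)ᵀ)ᵀ := by
        simp only [Matrix.mul_assoc]
    _ = _ := by
      rw [hPH.transpose_mul_mul_inv_mul_eq hD Cmat_mulVec_injective hZ₀
        (fun _ => mem_modelSpace_iff hZrow hZcol), mul_mul_mul_transpose_of_mul_eq_one hleft]

/-- `CᵀD⁻¹C` and `Z°ᵀ(CᵀD⁻¹C)⁻¹Z°` are invertible and the asymptotic
covariance matrix of the odds-ratio parameter estimator has the explicit representation
`Σ_θ̂ = Z°⁻ Cᵀ P^D_ℋ D⁻¹ C Z°⁻ᵀ = (Z°ᵀ(CᵀD⁻¹C)⁻¹Z°)⁻¹`. -/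
theorem covariance_explicit_representation
    {J K L : ℕ} (hJ : 1 ≤ J) (hK : 1 ≤ K) (hL : 1 ≤ L)
    (μ : Cell J K → ℝ) (hμ : ∀ i, 0 < μ i)
    (Z : Matrix (Cell J K) (Fin L) ℝ)
    (hZrow : ∀ j, Z (j, 0) = 0) (hZcol : ∀ k, Z (0, k) = 0)
    (hZrank : (Zred Z).rank = L)
    (PH : Matrix (Cell J K) (Cell J K) ℝ)
    (hPH : IsProjD (Matrix.diagonal μ) (modelSpace Z) PH) :
    IsUnit ((Cmat J K)ᵀ * (Matrix.diagonal μ)⁻¹ * Cmat J K) ∧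
    IsUnit ((Zred Z)ᵀ * ((Cmat J K)ᵀ * (Matrix.diagonal μ)⁻¹ * Cmat J K)⁻¹ * Zred Z) ∧
    ((Zred Z)ᵀ * Zred Z)⁻¹ * (Zred Z)ᵀ * (Cmat J K)ᵀ * PH * (Matrix.diagonal μ)⁻¹ *
        Cmat J K * (((Zred Z)ᵀ * Zred Z)⁻¹ * (Zred Z)ᵀ)ᵀ =
      ((Zred Z)ᵀ * ((Cmat J K)ᵀ * (Matrix.diagonal μ)⁻¹ * Cmat J K)⁻¹ * Zred Z)⁻¹ :=
  covariance_explicit_representation_general μ hμ Z hZrow hZcol hZrank PH hPH
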